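/- Let k₁ ≥ 0, k₂ > 0, η ∈ (0,1], M > 0, and let f ∈ C[0,1] satisfy |f(t) − f(x)| ≤ M |t−x|^η / (k₁x² + k₂x + t)^{η/2} for all x ∈ (0,1] and t ∈ [0,1] (i.e., f ∈ Lip_M^{(k₁,k₂)}(η)). Then for all λ ∈ [−1,1], n ≥ 2 and x ∈ (0,1], |B_{n,λ}(f;x) − f(x)| ≤ M α_n(x)^{η/2} (k₁x² + k₂x)^{−η/2}, where α_n(x) = B_{n,λ}((t−x)²;x). -/

import Mathlib

open Finset Filter

/-- Bernstein basis polynomial `b_{n,i}(x) = C(n,i) x^i (1-x)^(n-i)`. -/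
noncomputable def bern (n i : ℕ) (x : ℝ) : ℝ :=
  (n.choose i : ℝ) * x ^ i * (1 - x) ^ (n - i)

/-- Bézier basis `b̃_{n,i}(λ; x)` with shape parameter `lam`. -/
noncomputable def bez (n : ℕ) (lam x : ℝ) (i : ℕ) : ℝ :=
  if i = 0 then bern n 0 x - lam / ((n : ℝ) + 1) * bern (n + 1) 1 x
  else if i = n then bern n n x - lam / ((n : ℝ) + 1) * bern (n + 1) n x
  else bern n i x + lam * (((n : ℝ) - 2 * (i : ℝ) + 1) / ((n : ℝ) ^ 2 - 1) * bern (n + 1) i x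
    - ((n : ℝ) - 2 * (i : ℝ) - 1) / ((n : ℝ) ^ 2 - 1) * bern (n + 1) (i + 1) x)

/-- The λ-Bernstein operator `B_{n,λ}(f; x) = ∑_{i=0}^n f(i/n) b̃_{n,i}(λ; x)`. -/
noncomputable def lB (n : ℕ) (lam : ℝ) (f : ℝ → ℝ) (x : ℝ) : ℝ :=
  ∑ i ∈ Finset.range (n + 1), f ((i : ℝ) / (n : ℝ)) * bez n lam x i

/-! For `λ ∈ [-1, 1]` the Bézier weights `b̃_{n,i}(λ; x)` are nonnegative (each is `b_{n,i}(x)`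
times an affine function of `x` whose endpoint values lie in `[0, 2]`) and sum to `1` (their
`λ`-parts telescope). Hence `B_{n,λ}(f; x) - f(x)` is an average of `f(i/n) - f(x)`; the
Lipschitz-type condition bounds each term by `M (k₁x² + k₂x)^{-η/2} |i/n - x|^η`, and Jensen's
inequality for the concave map `u ↦ u^{η/2}` bounds the average of `((i/n - x)²)^{η/2}` by
`α_n(x)^{η/2}`. -/

open Real

lemma bern_nonneg (n i : ℕ) {x : ℝ} (hx0 : 0 ≤ x) (hx1 : x ≤ 1) : 0 ≤ bern n i x := by
  have : 0 ≤ 1 - x := by linarith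
  unfold bern
  positivity

lemma sum_bern (n : ℕ) (x : ℝ) : ∑ i ∈ range (n + 1), bern n i x = 1 := by
  have h := (add_pow x (1 - x) n).symm
  rw [add_sub_cancel, one_pow] at h
  rw [← h]
  exact sum_congr rfl fun i _ => by unfold bern; ring

lemma bern_succ_of_le {n i : ℕ} (hi : i ≤ n) (x : ℝ) :
    bern (n + 1) i x * ((n : ℝ) + 1 - i) = ((n : ℝ) + 1) * ((1 - x) * bern n i x) := by
  have h : ((n.choose i * (n + 1) : ℕ) : ℝ) = ((n + 1).choose i * (n + 1 - i) : ℕ) := by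
    rw [Nat.choose_mul_succ_eq]
  push_cast [Nat.cast_sub (by omega : i ≤ n + 1)] at h
  unfold bern
  rw [show n + 1 - i = n - i + 1 by omega, pow_succ]
  linear_combination (-(x ^ i * (1 - x) ^ (n - i) * (1 - x))) * h

lemma bern_succ_succ (n i : ℕ) (x : ℝ) :
    bern (n + 1) (i + 1) x * ((i : ℝ) + 1) = ((n : ℝ) + 1) * (x * bern n i x) := by
  have h : (((n + 1) * n.choose i : ℕ) : ℝ) = ((n + 1).choose (i + 1) * (i + 1) : ℕ) := by
    rw [Nat.add_one_mul_choose_eq]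
  push_cast at h
  unfold bern
  rw [Nat.add_sub_add_right, pow_succ]
  linear_combination (-(x ^ i * (1 - x) ^ (n - i) * x)) * h

lemma one_add_mul_sub_nonneg {lam p q x : ℝ} (hlam : |lam| ≤ 1) (hp : |p| ≤ 1) (hq : |q| ≤ 1)
    (hx0 : 0 ≤ x) (hx1 : x ≤ 1) : 0 ≤ 1 + lam * (p * (1 - x) - q * x) := by
  have hlp := abs_le.1 (abs_mul lam p ▸ mul_le_one₀ hlam (abs_nonneg p) hp)
  have hlq := abs_le.1 (abs_mul lam q ▸ mul_le_one₀ hlam (abs_nonneg q) hq)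
  have h1 := mul_nonneg (by linarith : 0 ≤ 1 + lam * p) (by linarith : 0 ≤ 1 - x)
  have h2 := mul_nonneg (by linarith : 0 ≤ 1 - lam * q) hx0
  linarith

lemma abs_div_le_one_of_abs_le {a b : ℝ} (h : |a| ≤ b) : |a / b| ≤ 1 := by
  rw [abs_div]
  exact div_le_one_of_le₀ (h.trans (le_abs_self b)) (abs_nonneg b)

lemma bez_zero (n : ℕ) (lam x : ℝ) : bez n lam x 0 = bern n 0 x * (1 - lam * x) := by
  simp only [bez, bern, if_true, Nat.choose_zero_right, Nat.choose_one_right, Nat.sub_zero,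
    Nat.add_sub_cancel, pow_zero, pow_one, Nat.cast_add, Nat.cast_one]
  field_simp

lemma bez_self {n : ℕ} (hn : n ≠ 0) (lam x : ℝ) :
    bez n lam x n = bern n n x * (1 - lam * (1 - x)) := by
  simp only [bez, bern, if_neg hn, if_true, Nat.choose_self, Nat.sub_self, pow_zero,
    Nat.choose_succ_self_right, Nat.cast_add, Nat.cast_one, Nat.add_sub_cancel_left, pow_one]
  field_simp

lemma bez_of_pos_of_lt {n i : ℕ} (hi0 : 0 < i) (hin : i < n) (lam x : ℝ) :
    bez n lam x i = bern n i x * (1 + lam * (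
      ((n : ℝ) - 2 * i + 1) / (((n : ℝ) - 1) * ((n : ℝ) + 1 - i)) * (1 - x)
      - ((n : ℝ) - 2 * i - 1) / (((n : ℝ) - 1) * ((i : ℝ) + 1)) * x)) := by
  have hn1 : (1 : ℝ) < n := by exact_mod_cast (show 1 < n by omega)
  have hin' : (i : ℝ) < n := by exact_mod_cast hin
  have hA : (n : ℝ) + 1 - i ≠ 0 := by linarith
  have hB : (i : ℝ) + 1 ≠ 0 := by positivity
  have hsq : (n : ℝ) ^ 2 - 1 = ((n : ℝ) - 1) * ((n : ℝ) + 1) := by ring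
  rw [bez, if_neg hi0.ne', if_neg hin.ne, hsq,
    eq_div_of_mul_eq hA (bern_succ_of_le hin.le x), eq_div_of_mul_eq hB (bern_succ_succ n i x)]
  field_simp

lemma bez_nonneg (n : ℕ) {lam x : ℝ} (hlam : |lam| ≤ 1) (hx0 : 0 ≤ x) (hx1 : x ≤ 1)
    {i : ℕ} (hi : i ≤ n) : 0 ≤ bez n lam x i := by
  have hlam' := abs_le.1 hlam
  rcases Nat.eq_zero_or_pos i with rfl | hi0
  · rw [bez_zero]
    exact mul_nonneg (bern_nonneg n 0 hx0 hx1) (by nlinarith)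
  rcases hi.eq_or_lt with rfl | hin
  · rw [bez_self hi0.ne']
    exact mul_nonneg (bern_nonneg i i hx0 hx1) (by nlinarith)
  rw [bez_of_pos_of_lt hi0 hin]
  refine mul_nonneg (bern_nonneg n i hx0 hx1) (one_add_mul_sub_nonneg hlam ?_ ?_ hx0 hx1)
  all_goals
    have hi1 : (1 : ℝ) ≤ i := by exact_mod_cast hi0
    have hin' : (i : ℝ) + 1 ≤ n := by exact_mod_cast hin
    refine abs_div_le_one_of_abs_le (abs_le.2 ⟨?_, ?_⟩) <;> nlinarith

/-- Vanishes at `i = 0` and `i > n`, so the `λ`-parts of the `bez n λ x i` telescope to `0`. -/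
noncomputable def bezCorrection (n : ℕ) (x : ℝ) (i : ℕ) : ℝ :=
  if i = 0 ∨ n < i then 0 else ((n : ℝ) - 2 * i + 1) / ((n : ℝ) ^ 2 - 1) * bern (n + 1) i x

lemma bez_eq_bern_add_sub {n i : ℕ} (hn : 2 ≤ n) (hi : i ≤ n) (lam x : ℝ) :
    bez n lam x i = bern n i x + lam * (bezCorrection n x i - bezCorrection n x (i + 1)) := by
  have hn' : (2 : ℝ) ≤ n := by exact_mod_cast hn
  have hsq : (n : ℝ) ^ 2 - 1 ≠ 0 := by nlinarith
  rcases Nat.eq_zero_or_pos i with rfl | hi0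
  · simp only [bez, bezCorrection, if_true, true_or, zero_add, one_ne_zero, false_or,
      show ¬n < 1 by omega, if_false, Nat.cast_one]
    field_simp
    ring
  rcases hi.eq_or_lt with rfl | hin
  · simp only [bez, bezCorrection, hi0.ne', if_true, if_false, lt_irrefl, or_false,
      Nat.lt_succ_self, or_true]
    field_simp
    ring
  · rw [bez, bezCorrection, bezCorrection, if_neg hi0.ne', if_neg hin.ne, if_neg (by omega),
      if_neg (by omega)]
    push_cast
    ring

lemma sum_bez {n : ℕ} (hn : 2 ≤ n) (lam x : ℝ) : ∑ i ∈ range (n + 1), bez n lam x i = 1 := by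
  rw [sum_congr rfl fun i hi => bez_eq_bern_add_sub hn (mem_range_succ_iff.1 hi) lam x,
    sum_add_distrib, sum_bern, ← mul_sum, sum_range_sub']
  simp [bezCorrection]

lemma abs_rpow_eq_sq_rpow_half (a η : ℝ) : |a| ^ η = (a ^ 2) ^ (η / 2) := by
  rw [← sq_abs, ← rpow_natCast_mul (abs_nonneg a)]
  congr 1
  push_cast
  ring

section Averaging

variable {ι : Type*} {s : Finset ι} {w t : ι → ℝ}

lemma sum_abs_sub_rpow_mul_le (hw : ∀ i ∈ s, 0 ≤ w i) (hsum : ∑ i ∈ s, w i = 1) (x : ℝ)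
    {η : ℝ} (hη0 : 0 ≤ η) (hη2 : η ≤ 2) :
    ∑ i ∈ s, |t i - x| ^ η * w i ≤ (∑ i ∈ s, (t i - x) ^ 2 * w i) ^ (η / 2) := by
  have h := (concaveOn_rpow (by linarith : 0 ≤ η / 2) (by linarith : η / 2 ≤ 1)).le_map_sum hw
    hsum fun i _ => Set.mem_Ici.2 (sq_nonneg (t i - x))
  simp only [smul_eq_mul] at h
  simpa only [abs_rpow_eq_sq_rpow_half, mul_comm (w _)] using h

theorem abs_sum_mul_sub_le_of_abs_sub_le (hw : ∀ i ∈ s, 0 ≤ w i) (hsum : ∑ i ∈ s, w i = 1)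
    {f : ℝ → ℝ} {x C η : ℝ} (hC : 0 ≤ C) (hη0 : 0 ≤ η) (hη2 : η ≤ 2)
    (hf : ∀ i ∈ s, |f (t i) - f x| ≤ C * |t i - x| ^ η) :
    |∑ i ∈ s, f (t i) * w i - f x| ≤ C * (∑ i ∈ s, (t i - x) ^ 2 * w i) ^ (η / 2) :=
  calc |∑ i ∈ s, f (t i) * w i - f x|
      = |∑ i ∈ s, (f (t i) - f x) * w i| := by
        simp only [sub_mul, sum_sub_distrib, ← mul_sum, hsum, mul_one]
    _ ≤ ∑ i ∈ s, |f (t i) - f x| * w i := by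
        refine (abs_sum_le_sum_abs _ _).trans_eq (sum_congr rfl fun i hi => ?_)
        rw [abs_mul, abs_of_nonneg (hw i hi)]
    _ ≤ ∑ i ∈ s, C * |t i - x| ^ η * w i :=
        sum_le_sum fun i hi => mul_le_mul_of_nonneg_right (hf i hi) (hw i hi)
    _ ≤ C * (∑ i ∈ s, (t i - x) ^ 2 * w i) ^ (η / 2) := by
        simp only [mul_assoc, ← mul_sum]
        exact mul_le_mul_of_nonneg_left (sum_abs_sub_rpow_mul_le hw hsum x hη0 hη2) hC

end Averaging

theorem lB_lipschitz_estimate_general (k₁ k₂ η M : ℝ) (hk₁ : 0 ≤ k₁) (hk₂ : 0 < k₂)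
    (hη : η ∈ Set.Ioc (0 : ℝ) 1) (hM : 0 < M) (f : ℝ → ℝ)
    (hlip : ∀ x ∈ Set.Ioc (0 : ℝ) 1, ∀ t ∈ Set.Icc (0 : ℝ) 1,
      |f t - f x| ≤ M * |t - x| ^ η / (k₁ * x ^ 2 + k₂ * x + t) ^ (η / 2))
    (lam : ℝ) (hlam : lam ∈ Set.Icc (-1 : ℝ) 1) (n : ℕ) (hn : 2 ≤ n)
    (x : ℝ) (hx : x ∈ Set.Ioc (0 : ℝ) 1) :
    |lB n lam f x - f x| ≤
      M * (lB n lam (fun t => (t - x) ^ 2) x) ^ (η / 2) * (k₁ * x ^ 2 + k₂ * x) ^ (-(η / 2)) := by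
  set K := k₁ * x ^ 2 + k₂ * x
  have hK : 0 < K := by have := hx.1; positivity
  have hnodes : ∀ i ∈ range (n + 1), (i : ℝ) / n ∈ Set.Icc (0 : ℝ) 1 := fun i hi =>
    ⟨by positivity, div_le_one_of_le₀ (by exact_mod_cast mem_range_succ_iff.1 hi)
      (Nat.cast_nonneg n)⟩
  have hpoint : ∀ t ∈ Set.Icc (0 : ℝ) 1, |f t - f x| ≤ M * K ^ (-(η / 2)) * |t - x| ^ η :=
    fun t ht => calc
      |f t - f x| ≤ M * |t - x| ^ η / (K + t) ^ (η / 2) := hlip x hx t ht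
      _ ≤ M * |t - x| ^ η / K ^ (η / 2) := by
        gcongr <;> linarith [ht.1, hη.1]
      _ = M * K ^ (-(η / 2)) * |t - x| ^ η := by rw [rpow_neg hK.le]; ring
  calc |lB n lam f x - f x|
      ≤ M * K ^ (-(η / 2)) * (lB n lam (fun t => (t - x) ^ 2) x) ^ (η / 2) :=
        abs_sum_mul_sub_le_of_abs_sub_le
          (fun i hi => bez_nonneg n (abs_le.2 hlam) hx.1.le hx.2 (mem_range_succ_iff.1 hi))
          (sum_bez hn lam x) (by positivity) hη.1.le (by linarith [hη.2])
          fun i hi => hpoint _ (hnodes i hi)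
    _ = _ := by ring

/-- local direct estimate for functions in the Lipschitz-type class
`Lip_M^{(k₁,k₂)}(η)`, with `α_n(x) = B_{n,λ}((t-x)²;x)`. -/
theorem lB_lipschitz_estimate (k₁ k₂ η M : ℝ) (hk₁ : 0 ≤ k₁) (hk₂ : 0 < k₂)
    (hη : η ∈ Set.Ioc (0 : ℝ) 1) (hM : 0 < M) (f : ℝ → ℝ)
    (hf : ContinuousOn f (Set.Icc 0 1))
    (hlip : ∀ x ∈ Set.Ioc (0 : ℝ) 1, ∀ t ∈ Set.Icc (0 : ℝ) 1,
      |f t - f x| ≤ M * |t - x| ^ η / (k₁ * x ^ 2 + k₂ * x + t) ^ (η / 2))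
    (lam : ℝ) (hlam : lam ∈ Set.Icc (-1 : ℝ) 1) (n : ℕ) (hn : 2 ≤ n)
    (x : ℝ) (hx : x ∈ Set.Ioc (0 : ℝ) 1) :
    |lB n lam f x - f x| ≤
      M * (lB n lam (fun t => (t - x) ^ 2) x) ^ (η / 2) * (k₁ * x ^ 2 + k₂ * x) ^ (-(η / 2)) :=
  lB_lipschitz_estimate_general k₁ k₂ η M hk₁ hk₂ hη hM f hlip lam hlam n hn x hx
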